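/- arXiv:2006.02259 — 4 statements merged into one kernel-verified Lean document; each statement's English description precedes it below -/
import Mathlib

section
/- For partitions λ and μ of n, if λ is p-dominated by μ (i.e., there exists a weak p-expansion λ = Σ_{i≥0} p^i γ(i) with each γ(i) an n-tuple of non-negative integers such that the partition obtained by sorting γ(i) in descending order is dominated by μ(i) for all i, where μ = Σ_{i≥0} p^i μ(i) is the base p expansion of μ into p-restricted partitions), then λ is dominated by μ in the dominance order. -/
/-- `f` is a partition of `n`: weakly decreasing, at most `n` parts, parts summing to `n`. -/
def IsPartition (n : ℕ) (f : ℕ → ℕ) : Prop :=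
  Antitone f ∧ (∀ i, n ≤ i → f i = 0) ∧ ∑ i ∈ Finset.range n, f i = n

/-- `Dominates μ l` : `l ⊴ μ` in the dominance order (partial sums of `l` bounded by those of `μ`). -/
def Dominates (μ l : ℕ → ℕ) : Prop :=
  ∀ a : ℕ, ∑ i ∈ Finset.range a, l i ≤ ∑ i ∈ Finset.range a, μ i

/-- `f` is `p`-restricted: consecutive differences are `< p`. -/
def IsRestricted (p : ℕ) (f : ℕ → ℕ) : Prop := ∀ i, f i - f (i + 1) < p

/-- A weak `p`-expansion `f = ∑_{i} p^i ⬝ c i` of a tuple `f` (a partition of `n` has all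
base-`p` digits vanishing from index `n` on, so we cut the sum off at `n`). -/
def IsWeakExpansion (p n : ℕ) (f : ℕ → ℕ) (c : ℕ → ℕ → ℕ) : Prop :=
  (∀ i, n ≤ i → c i = 0) ∧ ∀ j, f j = ∑ i ∈ Finset.range n, p ^ i * c i j

/-- The base `p` expansion of `f`: a weak `p`-expansion all of whose digits are
`p`-restricted partitions. -/
def IsBasePExpansion (p n : ℕ) (f : ℕ → ℕ) (c : ℕ → ℕ → ℕ) : Prop :=
  IsWeakExpansion p n f c ∧
    ∀ i, Antitone (c i) ∧ IsRestricted p (c i) ∧ ∀ j, n ≤ j → c i j = 0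

/-- `g` is the sorted (weakly decreasing) rearrangement of the tuple `γ`. -/
def IsSortedOf (γ g : ℕ → ℕ) : Prop :=
  Antitone g ∧ ∃ σ : Equiv.Perm ℕ, ∀ j, g j = γ (σ j)

/-- `μ` `p`-dominates `τ`: there is a weak `p`-expansion `τ = ∑ p^i ⬝ γ i` such that the
sorted rearrangement of each `γ i` is dominated by the `i`-th digit of the base `p`
expansion of `μ`. -/
def PDominates (p n : ℕ) (μ τ : ℕ → ℕ) : Prop :=
  ∃ m c, IsBasePExpansion p n μ m ∧ IsWeakExpansion p n τ c ∧
    ∀ i, ∃ g, IsSortedOf (c i) g ∧ Dominates (m i) g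

/-- The hook partition `(a, 1^b)`. -/
def hookFn (a b : ℕ) : ℕ → ℕ := fun j => if j = 0 then a else if j ≤ b then 1 else 0

/-- The one-part partition `(n)`. -/
def onePartFn (n : ℕ) : ℕ → ℕ := fun j => if j = 0 then n else 0

/-- The two-part partition `(a, b)`. -/
def twoPartFn (a b : ℕ) : ℕ → ℕ := fun j => if j = 0 then a else if j = 1 then b else 0

/-!
Both `l` and `μ` are weighted sums `∑ pⁱ ⬝ (digit i)` with the same weights, and dominance is
preserved by such sums, so it suffices that each digit `c i` of `l` is dominated by the digit
`m i` of `μ`. This holds because sorting a tuple in decreasing order can only increase its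
partial sums.
-/

open Finset

/- Elements of `T` outside `range #T` are `≥ #T`, elements of `range #T` missing from `T` are
`< #T`, and there are equally many of each. -/
theorem Antitone.sum_le_sum_range_card {M : Type*} [AddCommMonoid M] [PartialOrder M]
    [IsOrderedAddMonoid M] {g : ℕ → M} (hg : Antitone g) (T : Finset ℕ) :
    ∑ j ∈ T, g j ≤ ∑ j ∈ range #T, g j := by
  set R := range #T
  have hcard : #(T \ R) = #(R \ T) := card_sdiff_comm (card_range _).symm
  have hout : ∑ j ∈ T \ R, g j ≤ #(T \ R) • g #T :=
    sum_le_card_nsmul _ _ _ fun j hj => hg (by simpa [R] using (mem_sdiff.1 hj).2)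
  have hin : #(R \ T) • g #T ≤ ∑ j ∈ R \ T, g j :=
    card_nsmul_le_sum _ _ _ fun j hj => hg (mem_range.1 (mem_sdiff.1 hj).1).le
  rw [← sum_inter_add_sum_sdiff T R, ← sum_inter_add_sum_sdiff R T, inter_comm]
  exact add_le_add_right (hout.trans (hcard ▸ hin)) _

theorem IsSortedOf.sum_range_le {γ g : ℕ → ℕ} (h : IsSortedOf γ g) (a : ℕ) :
    ∑ j ∈ range a, γ j ≤ ∑ j ∈ range a, g j := by
  obtain ⟨hg, σ, hσ⟩ := h
  calc ∑ j ∈ range a, γ j = ∑ j ∈ (range a).map σ.symm.toEmbedding, g j := by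
        simp [sum_map, hσ]
    _ ≤ ∑ j ∈ range a, g j := by
        simpa using hg.sum_le_sum_range_card ((range a).map σ.symm.toEmbedding)

theorem Dominates.of_isSortedOf {μ γ g : ℕ → ℕ} (hg : Dominates μ g) (hsort : IsSortedOf γ g) :
    Dominates μ γ :=
  fun a => (hsort.sum_range_le a).trans (hg a)

theorem Dominates.sum_mul {ι : Type*} (s : Finset ι) (w : ι → ℕ) {μ l : ι → ℕ → ℕ}
    (h : ∀ i ∈ s, Dominates (μ i) (l i)) :
    Dominates (fun j => ∑ i ∈ s, w i * μ i j) (fun j => ∑ i ∈ s, w i * l i j) := by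
  intro a
  simp only [sum_comm (s := range a), ← mul_sum]
  exact sum_le_sum fun i hi => Nat.mul_le_mul_left _ (h i hi a)

theorem pDominates_implies_dominates_general (p n : ℕ) (l μ : ℕ → ℕ)
    (h : PDominates p n μ l) : Dominates μ l := by
  obtain ⟨m, c, ⟨⟨-, hμ⟩, -⟩, ⟨-, hl⟩, hdom⟩ := h
  rw [funext hμ, funext hl]
  refine Dominates.sum_mul _ _ fun i _ => ?_
  obtain ⟨g, hsort, hg⟩ := hdom i
  exact hg.of_isSortedOf hsort

/-- if `μ` `p`-dominates `l` then `μ` dominates `l`. -/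
theorem pDominates_implies_dominates (p n : ℕ) (hp : p.Prime) (l μ : ℕ → ℕ)
    (hl : IsPartition n l) (hμ : IsPartition n μ)
    (h : PDominates p n μ l) : Dominates μ l :=
  pDominates_implies_dominates_general p n l μ h
end

section
/- Let G be a finite group, Ω a finite G-set, and R a commutative ring. For each G-orbit A in Ω × Ω (under the diagonal action), define the R-linear endomorphism a_A of the free module R·Ω by a_A(x) = Σ_{y : (y,x) ∈ A} y. Then the elements a_A, as A ranges over the G-orbits of Ω × Ω, form an R-basis of End_{RG}(R·Ω). -/
/-!
Identify an endomorphism of `R·Ω` with its matrix, read as a function on `Ω × Ω`. Then `a_A`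
becomes the indicator function of `A`, and commuting with the `G`-action becomes invariance
under the diagonal action. The invariant functions on `Ω × Ω` are exactly those that factor
through the orbit space, so pulling back along the quotient map is an isomorphism from
`Ω × Ω / G → R` onto `End_{RG}(R·Ω)`, and it sends the standard basis to the maps `a_A`.
-/

open scoped Classical

/-- For a subset `A ⊆ Ω × Ω`, the endomorphism `a_A` of the permutation module `R·Ω`
(realised as `Ω → R`) with `a_A x = ∑_{(y,x) ∈ A} y` on basis elements; its matrix has
`(y,x)` entry `1` iff `(y,x) ∈ A`. -/
noncomputable def aMap (Ω R : Type) [Fintype Ω] [CommRing R] (A : Set (Ω × Ω)) :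
    (Ω → R) →ₗ[R] (Ω → R) :=
  Matrix.toLin' (fun y x => if (y, x) ∈ A then (1 : R) else 0)

/-- The `R`-linear action of `g : G` on the permutation module `Ω → R`, sending the basis
element `δ_ω` to `δ_{g • ω}`. -/
noncomputable def permMap (G Ω R : Type) [Group G] [MulAction G Ω] [CommRing R] (g : G) :
    (Ω → R) →ₗ[R] (Ω → R) :=
  LinearMap.funLeft R R fun y => g⁻¹ • y

/-- The `RG`-endomorphisms of the permutation module `R·Ω`: the `R`-linear endomorphisms
commuting with the `G`-action. -/
def equivEnd (G Ω R : Type) [Group G] [MulAction G Ω] [CommRing R] :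
    Submodule R ((Ω → R) →ₗ[R] (Ω → R)) where
  carrier := {φ | ∀ g : G, φ ∘ₗ permMap G Ω R g = permMap G Ω R g ∘ₗ φ}
  add_mem' := by
    intro a b ha hb g
    simp only [LinearMap.add_comp, LinearMap.comp_add, ha g, hb g]
  zero_mem' := by
    intro g
    simp
  smul_mem' := by
    intro c a ha g
    simp only [LinearMap.smul_comp, LinearMap.comp_smul, ha g]

noncomputable def transposeEnd (Ω R : Type) [Fintype Ω] [CommRing R]
    (φ : (Ω → R) →ₗ[R] (Ω → R)) : (Ω → R) →ₗ[R] (Ω → R) :=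
  Matrix.toLin' (LinearMap.toMatrix' φ).transpose

namespace MulAction

variable {G α : Type*} [Group G] [MulAction G α]

lemma mem_orbit_out_iff (p : α) (q : Quotient (orbitRel G α)) :
    p ∈ orbit G q.out ↔ ⟦p⟧ = q := by
  rw [← orbitRel_apply, ← Quotient.eq (r := orbitRel G α), Quotient.out_eq]

lemma mem_range_funLeft_orbitRel_mk_iff (R : Type*) [Semiring R] (f : α → R) :
    f ∈ LinearMap.range (LinearMap.funLeft R R (Quotient.mk (orbitRel G α))) ↔
      ∀ (g : G) (p : α), f (g • p) = f p := by
  constructor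
  · rintro ⟨f', rfl⟩ g p
    exact congrArg f' (Quotient.sound (orbitRel_apply.2 (mem_orbit p g)))
  · intro hf
    refine ⟨Quotient.lift f fun a b hab => ?_, rfl⟩
    obtain ⟨g, rfl⟩ := orbitRel_apply.1 hab
    exact hf g b

end MulAction

section

variable {G Ω R : Type} [Group G] [MulAction G Ω] [CommRing R]

lemma permMap_single (g : G) (y : Ω) :
    permMap G Ω R g (Pi.single y 1) = Pi.single (g • y) 1 := by
  ext x
  simp [permMap, Pi.single_apply, inv_smul_eq_iff]

variable [Fintype Ω]

lemma toMatrix'_comp_permMap (φ : (Ω → R) →ₗ[R] (Ω → R)) (g : G) (x y : Ω) :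
    LinearMap.toMatrix' (φ ∘ₗ permMap G Ω R g) x y = LinearMap.toMatrix' φ x (g • y) := by
  simp [LinearMap.toMatrix'_apply, permMap_single]

lemma toMatrix'_permMap_comp (φ : (Ω → R) →ₗ[R] (Ω → R)) (g : G) (x y : Ω) :
    LinearMap.toMatrix' (permMap G Ω R g ∘ₗ φ) x y = LinearMap.toMatrix' φ (g⁻¹ • x) y := by
  simp [LinearMap.toMatrix'_apply, permMap]

lemma mem_equivEnd_iff (φ : (Ω → R) →ₗ[R] (Ω → R)) :
    φ ∈ equivEnd G Ω R ↔
      ∀ (g : G) (x y : Ω), LinearMap.toMatrix' φ (g • x) (g • y) = LinearMap.toMatrix' φ x y := by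
  refine forall_congr' fun g => ?_
  rw [← LinearMap.toMatrix'.injective.eq_iff, ← Matrix.ext_iff]
  constructor
  · intro h x y
    have := h (g • x) y
    rwa [toMatrix'_comp_permMap, toMatrix'_permMap_comp, inv_smul_smul] at this
  · intro h x y
    rw [toMatrix'_comp_permMap, toMatrix'_permMap_comp, ← h (g⁻¹ • x) y, smul_inv_smul]

variable (Ω R) in
noncomputable def endEquivPairFun : ((Ω → R) →ₗ[R] (Ω → R)) ≃ₗ[R] (Ω × Ω → R) :=
  LinearMap.toMatrix'.trans (LinearEquiv.curry R R Ω Ω).symm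

lemma endEquivPairFun_aMap (A : Set (Ω × Ω)) (p : Ω × Ω) :
    endEquivPairFun Ω R (aMap Ω R A) p = if p ∈ A then 1 else 0 :=
  congrFun₂ (LinearMap.toMatrix'_toLin' fun y x => if (y, x) ∈ A then (1 : R) else 0) p.1 p.2

variable (G Ω R) in
noncomputable def orbitSumMap :
    (Quotient (MulAction.orbitRel G (Ω × Ω)) → R) →ₗ[R] ((Ω → R) →ₗ[R] (Ω → R)) :=
  (endEquivPairFun Ω R).symm.toLinearMap ∘ₗ
    LinearMap.funLeft R R (Quotient.mk (MulAction.orbitRel G (Ω × Ω)))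

lemma orbitSumMap_single (q : Quotient (MulAction.orbitRel G (Ω × Ω))) :
    orbitSumMap G Ω R (Pi.single q 1) = aMap Ω R (MulAction.orbit G q.out) := by
  rw [orbitSumMap, LinearMap.comp_apply, LinearEquiv.coe_toLinearMap,
    LinearEquiv.symm_apply_eq]
  ext p
  simp [endEquivPairFun_aMap, MulAction.mem_orbit_out_iff, Pi.single_apply]

lemma orbitSumMap_injective : Function.Injective (orbitSumMap G Ω R) :=
  (endEquivPairFun Ω R).symm.injective.comp
    (LinearMap.funLeft_injective_of_surjective _ _ _ Quotient.mk_surjective)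

lemma range_orbitSumMap : LinearMap.range (orbitSumMap G Ω R) = equivEnd G Ω R := by
  ext φ
  rw [orbitSumMap, LinearMap.range_comp, Submodule.mem_map_equiv,
    LinearEquiv.symm_symm, MulAction.mem_range_funLeft_orbitRel_mk_iff, mem_equivEnd_iff]
  exact forall_congr' fun g => Prod.forall

end

theorem orbit_maps_basis_general (G Ω R : Type) [Group G] [MulAction G Ω]
    [Fintype Ω] [CommRing R] :
    LinearIndependent R
      (fun q : Quotient (MulAction.orbitRel G (Ω × Ω)) =>
        aMap Ω R (MulAction.orbit G q.out)) ∧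
    Submodule.span R
      (Set.range fun q : Quotient (MulAction.orbitRel G (Ω × Ω)) =>
        aMap Ω R (MulAction.orbit G q.out)) = equivEnd G Ω R := by
  have hfamily : (fun q : Quotient (MulAction.orbitRel G (Ω × Ω)) =>
      aMap Ω R (MulAction.orbit G q.out)) = orbitSumMap G Ω R ∘ Pi.basisFun R _ := by
    ext1 q
    simp [orbitSumMap_single]
  rw [hfamily]
  constructor
  · exact (Pi.basisFun R _).linearIndependent.map' _
      (LinearMap.ker_eq_bot.2 orbitSumMap_injective)
  · rw [Set.range_comp, Submodule.span_image, (Pi.basisFun R _).span_eq, Submodule.map_top,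
      range_orbitSumMap]

/-- the endomorphisms `a_A`, for `A` ranging over the `G`-orbits of
`Ω × Ω` (diagonal action), form an `R`-basis of `End_{RG}(R·Ω)`: they are linearly
independent and span exactly the submodule of `G`-equivariant endomorphisms. -/
theorem orbit_maps_basis (G Ω R : Type) [Group G] [Finite G] [MulAction G Ω]
    [Fintype Ω] [CommRing R] :
    LinearIndependent R
      (fun q : Quotient (MulAction.orbitRel G (Ω × Ω)) =>
        aMap Ω R (MulAction.orbit G q.out)) ∧
    Submodule.span R
      (Set.range fun q : Quotient (MulAction.orbitRel G (Ω × Ω)) =>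
        aMap Ω R (MulAction.orbit G q.out)) = equivEnd G Ω R :=
  orbit_maps_basis_general G Ω R
end

section
/- Let p be a prime not dividing n. Then every partition μ of n dominating the hook partition (n-1, 1) p-dominates (n-1,1). Consequently, writing n = Σ_{i≥0} p^i n_i in base p with n_0 ≠ 0, the partition (n-1,1) has weak p-expansion with γ(0) = (n_0 - 1, 1) and γ(i) = (n_i, 0) for i ≥ 1, and for μ = (n) (the unique partition strictly dominating (n-1,1)) each sorted γ(i) is dominated by the i-th digit partition of the base p expansion of μ. -/
/-!
Dominating `(n-1, 1)` forces the first two parts of `μ` to sum to `n`, so `μ = (n)` or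
`μ = (n-1, 1)`; the latter `p`-dominates itself through its own base `p` expansion.
For `μ = (n)`, whose `i`-th digit is `(n_i)`, move one box of the `0`-th layer into the second
row: `γ(0) = (n_0 - 1, 1)` and `γ(i) = (n_i)` for `i ≥ 1`. Since `p ^ 0 = 1` this is a weak
expansion of `(n-1, 1)`, and `n_0 ≥ 1` (because `p ∤ n`) gives `sort γ(0) ⊴ (n_0)`.
-/

open Finset

section TwoPartFn

@[simp] lemma twoPartFn_apply_zero (a b : ℕ) : twoPartFn a b 0 = a := rfl

@[simp] lemma twoPartFn_apply_one (a b : ℕ) : twoPartFn a b 1 = b := rfl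

@[simp] lemma twoPartFn_apply_add_two (a b j : ℕ) : twoPartFn a b (j + 2) = 0 := by
  simp [twoPartFn]

lemma twoPartFn_eq_zero_of_two_le {a b j : ℕ} (hj : 2 ≤ j) : twoPartFn a b j = 0 := by
  obtain ⟨j, rfl⟩ := Nat.exists_eq_add_of_le' hj
  exact twoPartFn_apply_add_two a b j

lemma hookFn_one_eq_twoPartFn (a : ℕ) : hookFn a 1 = twoPartFn a 1 := by
  funext j
  rcases j with _ | _ | j <;> simp [hookFn]

lemma twoPartFn_antitone {a b : ℕ} (h : b ≤ a) : Antitone (twoPartFn a b) := by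
  intro i j hij
  simp only [twoPartFn]
  split_ifs <;> omega

lemma twoPartFn_isRestricted {p a b : ℕ} (ha : a - b < p) (hb : b < p) :
    IsRestricted p (twoPartFn a b)
  | 0 => by simpa using ha
  | 1 => by simpa using hb
  | j + 2 => by simp only [twoPartFn_apply_add_two]; omega

lemma sum_range_twoPartFn (a b : ℕ) {k : ℕ} (hk : 2 ≤ k) :
    ∑ i ∈ range k, twoPartFn a b i = a + b := by
  induction k, hk using Nat.le_induction with
  | base => simp [sum_range_succ]
  | succ k hk ih => rw [sum_range_succ, ih, twoPartFn_eq_zero_of_two_le (by omega), add_zero]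

lemma dominates_twoPartFn {a b a' b' : ℕ} (h₀ : a' ≤ a) (h₁ : a' + b' ≤ a + b) :
    Dominates (twoPartFn a b) (twoPartFn a' b')
  | 0 => le_rfl
  | 1 => by simpa using h₀
  | k + 2 => by rwa [sum_range_twoPartFn _ _ (by omega), sum_range_twoPartFn _ _ (by omega)]

lemma isSortedOf_self {f : ℕ → ℕ} (hf : Antitone f) : IsSortedOf f f :=
  ⟨hf, Equiv.refl ℕ, fun _ => rfl⟩

lemma isSortedOf_twoPartFn (a b : ℕ) :
    IsSortedOf (twoPartFn a b) (twoPartFn (max a b) (min a b)) := by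
  rcases le_total b a with h | h
  · rw [max_eq_left h, min_eq_right h]
    exact isSortedOf_self (twoPartFn_antitone h)
  · rw [max_eq_right h, min_eq_left h]
    refine ⟨twoPartFn_antitone h, Equiv.swap 0 1, ?_⟩
    rintro (_ | _ | j)
    · simp
    · simp
    · rw [Equiv.swap_apply_of_ne_of_ne (by omega) (by omega)]
      simp

end TwoPartFn

section Partition

variable {n : ℕ} {μ : ℕ → ℕ}

lemma IsPartition.add_add_sum_Ico_two (hμ : IsPartition n μ) (hn : 2 ≤ n) :
    μ 0 + μ 1 + ∑ j ∈ Ico 2 n, μ j = n := by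
  have h := sum_range_add_sum_Ico μ hn
  rw [hμ.2.2] at h
  simpa [sum_range_succ] using h

lemma IsPartition.eq_twoPartFn (hμ : IsPartition n μ) (hn : 2 ≤ n) (h : n ≤ μ 0 + μ 1) :
    μ = twoPartFn (μ 0) (μ 1) := by
  have htail : ∑ j ∈ Ico 2 n, μ j = 0 := by
    have := hμ.add_add_sum_Ico_two hn
    omega
  funext j
  rcases j with _ | _ | j
  · rfl
  · rfl
  · rw [twoPartFn_apply_add_two]
    by_cases hj : j + 2 < n
    · exact sum_eq_zero_iff.1 htail _ (mem_Ico.2 ⟨by omega, hj⟩)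
    · exact hμ.2.1 _ (by omega)

lemma IsPartition.eq_twoPartFn_of_dominates_hook (hμ : IsPartition n μ) (hn : 2 ≤ n)
    (hdom : Dominates μ (twoPartFn (n - 1) 1)) :
    μ = twoPartFn n 0 ∨ μ = twoPartFn (n - 1) 1 := by
  have h₀ : n - 1 ≤ μ 0 := by simpa using hdom 1
  have h₁ : n ≤ μ 0 + μ 1 := by
    have := hdom 2
    simp only [sum_range_succ, range_zero, sum_empty, twoPartFn_apply_zero,
      twoPartFn_apply_one] at this
    omega
  have h₂ := hμ.add_add_sum_Ico_two hn
  rw [hμ.eq_twoPartFn hn h₁]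
  obtain ⟨h0, h1⟩ | ⟨h0, h1⟩ : μ 0 = n ∧ μ 1 = 0 ∨ μ 0 = n - 1 ∧ μ 1 = 1 := by omega
  · exact .inl (by rw [h0, h1])
  · exact .inr (by rw [h0, h1])

end Partition

lemma sum_range_pow_mul_digit (p x N : ℕ) :
    ∑ i ∈ range N, p ^ i * (x / p ^ i % p) = x % p ^ N := by
  induction N with
  | zero => simp [Nat.mod_one]
  | succ N ih => rw [sum_range_succ, ih, Nat.mod_pow_succ]

section BaseExpansion

variable {p n : ℕ}

lemma digit_eq_zero_of_lt {x i : ℕ} (h : x < p ^ i) : x / p ^ i % p = 0 := by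
  simp [Nat.div_eq_of_lt h]

/-- The rows of the `i`-th layer are read off from the `i`-th digits of the row
differences `a - b` and `b` of `(a, b)`. -/
lemma isBasePExpansion_twoPartFn (hp : 1 < p) {a b : ℕ} (hn : 2 ≤ n) (hba : b ≤ a)
    (ha : a < p ^ n) :
    IsBasePExpansion p n (twoPartFn a b)
      (fun i => twoPartFn ((a - b) / p ^ i % p + b / p ^ i % p) (b / p ^ i % p)) := by
  have hvanish : ∀ {x i}, x ≤ a → n ≤ i → x / p ^ i % p = 0 := fun hx hi =>
    digit_eq_zero_of_lt ((hx.trans_lt ha).trans_le (Nat.pow_le_pow_right (by omega) hi))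
  have hsum : ∀ {x}, x ≤ a → ∑ i ∈ range n, p ^ i * (x / p ^ i % p) = x := fun hx => by
    rw [sum_range_pow_mul_digit, Nat.mod_eq_of_lt (hx.trans_lt ha)]
  have hdigit : ∀ x i, x / p ^ i % p < p := fun _ _ => Nat.mod_lt _ (by omega)
  refine ⟨⟨fun i hi => ?_, ?_⟩, fun i => ⟨twoPartFn_antitone (by omega),
    twoPartFn_isRestricted (by simpa using hdigit _ _) (hdigit _ _),
    fun j hj => twoPartFn_eq_zero_of_two_le (by omega)⟩⟩
  · funext j
    change twoPartFn _ _ j = 0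
    rw [hvanish (Nat.sub_le a b) hi, hvanish hba hi]
    rcases j with _ | _ | j <;> rfl
  · rintro (_ | _ | j)
    · simp only [twoPartFn_apply_zero, mul_add, sum_add_distrib, hsum (Nat.sub_le a b),
        hsum hba]
      omega
    · simp [hsum hba]
    · simp

lemma IsWeakExpansion.update_zero {f g γ : ℕ → ℕ} {c : ℕ → ℕ → ℕ}
    (h : IsWeakExpansion p n f c) (hn : 0 < n) (hγ : ∀ j, f j + γ j = g j + c 0 j) :
    IsWeakExpansion p n g (Function.update c 0 γ) := by
  obtain ⟨k, rfl⟩ := Nat.exists_eq_add_of_lt hn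
  refine ⟨fun i hi => by rw [Function.update_of_ne (by omega)]; exact h.1 i hi, fun j => ?_⟩
  have hf := h.2 j
  rw [sum_range_succ'] at hf ⊢
  simp only [Function.update_self, ne_eq, Nat.add_one_ne_zero, not_false_eq_true,
    Function.update_of_ne, pow_zero, one_mul] at hf ⊢
  have := hγ j
  omega

lemma IsBasePExpansion.pDominates_self {μ : ℕ → ℕ} {m : ℕ → ℕ → ℕ}
    (h : IsBasePExpansion p n μ m) : PDominates p n μ μ :=
  ⟨m, m, h, h.1, fun i => ⟨m i, isSortedOf_self (h.2 i).1, fun _ => le_rfl⟩⟩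

lemma pDominates_twoPartFn_zero_hook (hp : 1 < p) (hn : 2 ≤ n) (hpn : ¬ p ∣ n) :
    PDominates p n (twoPartFn n 0) (twoPartFn (n - 1) 1) := by
  have hm := isBasePExpansion_twoPartFn hp hn (Nat.zero_le n) (Nat.lt_pow_self hp)
  set m := fun i => twoPartFn ((n - 0) / p ^ i % p + 0 / p ^ i % p) (0 / p ^ i % p)
  have hm0 : m 0 = twoPartFn (n % p) 0 := by simp [m]
  have hn0 : 1 ≤ n % p := Nat.pos_of_ne_zero (mt Nat.dvd_of_mod_eq_zero hpn)
  refine ⟨m, Function.update m 0 (twoPartFn (n % p - 1) 1), hm,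
    hm.1.update_zero (by omega) ?_, fun i => ?_⟩
  · rintro (_ | _ | j) <;> simp [hm0]
    omega
  · rcases eq_or_ne i 0 with rfl | hi
    · rw [Function.update_self, hm0]
      exact ⟨_, isSortedOf_twoPartFn _ _, dominates_twoPartFn (by omega) (by omega)⟩
    · rw [Function.update_of_ne hi]
      exact ⟨m i, isSortedOf_self (hm.2 i).1, fun _ => le_rfl⟩

end BaseExpansion

/-- if `p` does not divide `n`, every partition `μ` of `n` dominating the
hook `(n-1, 1)` also `p`-dominates it. -/
theorem pDominates_hook_n_sub_one_one (p n : ℕ) (hp : p.Prime) (hn : 2 ≤ n)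
    (hpn : ¬ p ∣ n) (μ : ℕ → ℕ) (hμ : IsPartition n μ)
    (hdom : Dominates μ (hookFn (n - 1) 1)) :
    PDominates p n μ (hookFn (n - 1) 1) := by
  rw [hookFn_one_eq_twoPartFn] at hdom ⊢
  rcases hμ.eq_twoPartFn_of_dominates_hook hn hdom with rfl | rfl
  · exact pDominates_twoPartFn_zero_hook hp.one_lt hn hpn
  · have hlt : n - 1 < p ^ n := (Nat.sub_le n 1).trans_lt (Nat.lt_pow_self hp.one_lt)
    exact (isBasePExpansion_twoPartFn hp.one_lt hn (by omega) hlt).pDominates_self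
end

section
/- Let p be a prime with n > 2p, p ∤ n, and 1 ≤ r < p. Then every partition μ of n in the dominance-upward closure of the hooks {(a,1^b) : a+b=n, 1 ≤ b ≤ r} p-dominates some hook in that set. -/
/-!
Dominance by a hook `(a, 1^b)` with `b ≤ r < p` forces `μ 0 ≥ n - b`, so the tail
`n - μ 0 = μ 1 + μ 2 + ⋯` is smaller than `p`. Every difference `μ k - μ (k + 1)` with `k ≥ 1` is
then a single base-`p` digit: the zeroth digit of `μ` is `(d, μ 1, μ 2, …)` and the higher digits
only have a first part. A hook is therefore `p`-dominated as soon as it has a weak expansion whose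
higher digits are those first parts and whose zeroth digit, sorted, is dominated by
`(d, μ 1, μ 2, …)`. If `μ 0 < n`, the hook `(μ 0, 1^(n - μ 0))` works with zeroth digit
`(d, 1^(n - μ 0))`; if `μ = (n)`, then `d = n % p ≠ 0` and the hook `(n - 1, 1)` works with
zeroth digit `(d - 1, 1)`.
-/

open Finset

lemma sum_range_pow_mul_div_pow_mod (p x t : ℕ) :
    ∑ i ∈ range t, p ^ i * (x / p ^ i % p) = x % p ^ t := by
  induction t with
  | zero => simp [Nat.mod_one]
  | succ t ih => rw [sum_range_succ, ih, Nat.mod_pow_succ]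

lemma sum_Ico_tsub_add_of_antitone {f : ℕ → ℕ} (hf : Antitone f) {j N : ℕ} (h : j ≤ N) :
    ∑ k ∈ Ico j N, (f k - f (k + 1)) + f N = f j := by
  induction N, h using Nat.le_induction with
  | base => simp
  | succ N hjN ih =>
    rw [sum_Ico_succ_top hjN]
    have : f (N + 1) ≤ f N := hf N.le_succ
    omega

lemma min_le_sum_range_of_antitone {f : ℕ → ℕ} (hf : Antitone f) (N t : ℕ) :
    min t (∑ j ∈ range N, f j) ≤ ∑ j ∈ range t, f j := by
  by_cases hpos : ∀ j < t, 1 ≤ f j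
  · calc min t (∑ j ∈ range N, f j) ≤ ∑ _j ∈ range t, 1 := by simp
      _ ≤ ∑ j ∈ range t, f j := sum_le_sum fun j hj => hpos j (mem_range.mp hj)
  · push Not at hpos
    obtain ⟨j₀, hj₀t, hj₀⟩ := hpos
    have hzero : ∀ k, t ≤ k → f k = 0 := fun k hk => by
      have := hf (hj₀t.le.trans hk); omega
    refine min_le_of_right_le ?_
    rcases le_total N t with hNt | htN
    · exact sum_le_sum_of_subset (range_subset_range.mpr hNt)
    · rw [← sum_range_add_sum_Ico f htN, sum_eq_zero fun k hk => hzero k (mem_Ico.mp hk).1,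
        add_zero]

namespace IsPartition

variable {n : ℕ} {μ : ℕ → ℕ}

lemma sum_range_succ_add_apply_zero (hμ : IsPartition n μ) :
    ∑ j ∈ range n, μ (j + 1) + μ 0 = n := by
  rw [← sum_range_succ', sum_range_succ, hμ.2.2, hμ.2.1 n le_rfl, add_zero]

lemma apply_le (hμ : IsPartition n μ) (k : ℕ) : μ k ≤ n :=
  (hμ.1 k.zero_le).trans (by have := hμ.sum_range_succ_add_apply_zero; omega)

lemma apply_one_le (hμ : IsPartition n μ) : μ 1 ≤ n - μ 0 := by
  have := hμ.sum_range_succ_add_apply_zero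
  rcases n.eq_zero_or_pos with rfl | hn
  · simp [hμ.2.1 1 (Nat.zero_le 1)]
  · have : μ 1 ≤ ∑ j ∈ range n, μ (j + 1) :=
      single_le_sum (f := fun j => μ (j + 1)) (fun _ _ => Nat.zero_le _) (mem_range.mpr hn)
    omega

lemma one_le_apply_one (hμ : IsPartition n μ) (h : μ 0 < n) : 1 ≤ μ 1 := by
  by_contra! h1
  have htail : ∑ j ∈ range n, μ (j + 1) = 0 :=
    sum_eq_zero fun j _ => Nat.le_zero.mp ((hμ.1 (Nat.le_add_left 1 j)).trans (by omega))
  have := hμ.sum_range_succ_add_apply_zero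
  omega

end IsPartition

/-- The digits `μ(i)` of the base `p` expansion of `μ`: row `i` is the partition whose `j`-th
difference is the `i`-th base-`p` digit of `μ j - μ (j + 1)`. -/
def baseDigits (p n : ℕ) (μ : ℕ → ℕ) (i j : ℕ) : ℕ :=
  ∑ k ∈ Ico j n, (μ k - μ (k + 1)) / p ^ i % p

section BaseDigits

variable {p n : ℕ} {μ : ℕ → ℕ}

lemma baseDigits_of_le {i j : ℕ} (hj : n ≤ j) : baseDigits p n μ i j = 0 := by
  simp [baseDigits, Ico_eq_empty_of_le hj]

lemma baseDigits_of_lt {i j : ℕ} (hj : j < n) :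
    baseDigits p n μ i j = (μ j - μ (j + 1)) / p ^ i % p + baseDigits p n μ i (j + 1) := by
  rw [baseDigits, sum_eq_sum_Ico_succ_bot hj]
  rfl

lemma antitone_baseDigits (i : ℕ) : Antitone (baseDigits p n μ i) :=
  fun _ _ h => sum_le_sum_of_subset (Ico_subset_Ico h le_rfl)

lemma isRestricted_baseDigits (hp : 0 < p) (i : ℕ) : IsRestricted p (baseDigits p n μ i) := by
  intro j
  rcases lt_or_ge j n with hj | hj
  · rw [baseDigits_of_lt hj]
    have := Nat.mod_lt ((μ j - μ (j + 1)) / p ^ i) hp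
    omega
  · rw [baseDigits_of_le hj, baseDigits_of_le (Nat.le_succ_of_le hj)]
    exact hp

lemma isBasePExpansion_baseDigits (hp : 1 < p) (hμ : IsPartition n μ) :
    IsBasePExpansion p n μ (baseDigits p n μ) := by
  have hdiff : ∀ k, μ k - μ (k + 1) < p ^ n := fun k =>
    ((Nat.sub_le _ _).trans (hμ.apply_le k)).trans_lt (Nat.lt_pow_self hp)
  refine ⟨⟨fun i hi => ?_, fun j => ?_⟩, fun i =>
    ⟨antitone_baseDigits i, isRestricted_baseDigits (by omega) i, fun j => baseDigits_of_le⟩⟩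
  · funext j
    refine sum_eq_zero fun k _ => ?_
    rw [Nat.div_eq_of_lt ((hdiff k).trans_le (Nat.pow_le_pow_right (by omega) hi)), Nat.zero_mod]
  · have hswap : ∑ i ∈ range n, p ^ i * baseDigits p n μ i j
        = ∑ k ∈ Ico j n, (μ k - μ (k + 1)) := by
      simp_rw [baseDigits, mul_sum]
      rw [sum_comm]
      refine sum_congr rfl fun k _ => ?_
      rw [sum_range_pow_mul_div_pow_mod, Nat.mod_eq_of_lt (hdiff k)]
    rw [hswap]
    rcases le_total j n with hjn | hnj
    · have := sum_Ico_tsub_add_of_antitone hμ.1 hjn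
      rw [hμ.2.1 n le_rfl] at this
      omega
    · rw [Ico_eq_empty_of_le hnj, sum_empty, hμ.2.1 j hnj]

lemma baseDigits_zero_succ (hμ : IsPartition n μ) (h1 : μ 1 < p) (j : ℕ) :
    baseDigits p n μ 0 (j + 1) = μ (j + 1) := by
  rcases le_total (j + 1) n with hjn | hnj
  · have hdigit : ∀ k ∈ Ico (j + 1) n, (μ k - μ (k + 1)) / p ^ 0 % p = μ k - μ (k + 1) :=
      fun k hk => by
        have := hμ.1 (Nat.one_le_of_lt (mem_Ico.mp hk).1)
        rw [pow_zero, Nat.div_one, Nat.mod_eq_of_lt (by omega)]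
    have := sum_Ico_tsub_add_of_antitone hμ.1 hjn
    rw [hμ.2.1 n le_rfl] at this
    rw [baseDigits, sum_congr rfl hdigit]
    omega
  · rw [baseDigits_of_le hnj, hμ.2.1 _ hnj]

lemma baseDigits_zero_zero (hμ : IsPartition n μ) (hn : 0 < n) (h1 : μ 1 < p) :
    baseDigits p n μ 0 0 = (μ 0 - μ 1) % p + μ 1 := by
  rw [baseDigits_of_lt hn, baseDigits_zero_succ hμ h1, pow_zero, Nat.div_one]

end BaseDigits

lemma antitone_onePartFn (a : ℕ) : Antitone (onePartFn a) := by
  intro i j hij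
  simp only [onePartFn]
  split_ifs <;> omega

lemma dominates_onePartFn_apply_zero (f : ℕ → ℕ) : Dominates f (onePartFn (f 0)) := by
  rintro (_ | t)
  · simp
  · rw [sum_range_succ', sum_range_succ']
    simp [onePartFn]

lemma dominates_onePartFn_twoPartFn (a b : ℕ) : Dominates (onePartFn (a + b)) (twoPartFn a b) := by
  rintro (_ | _ | t)
  · simp
  · simp [onePartFn, twoPartFn]
  · simp [sum_range_succ', onePartFn, twoPartFn]
    omega

lemma exists_isSortedOf_twoPartFn_dominates (a b : ℕ) :
    ∃ g, IsSortedOf (twoPartFn a b) g ∧ Dominates (onePartFn (a + b)) g := by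
  rcases le_total b a with hba | hab
  · refine ⟨twoPartFn a b, isSortedOf_self fun i j hij => ?_, dominates_onePartFn_twoPartFn a b⟩
    simp only [twoPartFn]
    split_ifs <;> omega
  · refine ⟨twoPartFn b a, ⟨fun i j hij => ?_, Equiv.swap 0 1, fun j => ?_⟩, ?_⟩
    · simp only [twoPartFn]
      split_ifs <;> omega
    · rcases j with _ | _ | j <;> simp [twoPartFn, Equiv.swap_apply_of_ne_of_ne]
    · simpa [add_comm] using dominates_onePartFn_twoPartFn b a

lemma sum_range_succ_hookFn (a b t : ℕ) : ∑ j ∈ range (t + 1), hookFn a b j = a + min t b := by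
  have hfilter : (range t).filter (fun j => j + 1 ≤ b) = range (min t b) := by
    ext j
    simp only [mem_filter, mem_range]
    omega
  rw [sum_range_succ', add_comm]
  simp only [hookFn, Nat.add_one_ne_zero, if_false, if_true]
  rw [sum_boole, hfilter, card_range, Nat.cast_id]

lemma antitone_hookFn {a : ℕ} (ha : 1 ≤ a) (b : ℕ) : Antitone (hookFn a b) := by
  intro i j hij
  simp only [hookFn]
  split_ifs <;> omega

lemma dominates_hookFn_apply_zero {ν : ℕ → ℕ} (hν : Antitone ν) (N : ℕ) :
    Dominates ν (hookFn (ν 0) (∑ j ∈ range N, ν (j + 1))) := by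
  rintro (_ | t)
  · simp
  · rw [sum_range_succ_hookFn, sum_range_succ', add_comm]
    have := min_le_sum_range_of_antitone (f := fun j => ν (j + 1))
      (fun _ _ hij => hν (Nat.add_le_add_right hij 1)) N t
    omega

lemma pDominates_of_zeroth_digit {p n : ℕ} (hn : 0 < n) {μ τ γ : ℕ → ℕ} {m : ℕ → ℕ → ℕ}
    (hm : IsBasePExpansion p n μ m) (h0 : γ 0 + μ 0 = τ 0 + m 0 0)
    (hsucc : ∀ j, τ (j + 1) = γ (j + 1)) (hγ : ∃ g, IsSortedOf γ g ∧ Dominates (m 0) g) :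
    PDominates p n μ τ := by
  obtain ⟨n, rfl⟩ : ∃ n', n = n' + 1 := ⟨n - 1, by omega⟩
  set c : ℕ → ℕ → ℕ := fun i => if i = 0 then γ else onePartFn (m i 0) with hc
  refine ⟨m, c, hm, ⟨fun i hi => ?_, fun j => ?_⟩, fun i => ?_⟩
  · have hi0 : i ≠ 0 := by omega
    funext j
    simp [hc, hi0, hm.1.1 i hi, onePartFn]
  · rw [sum_range_succ']
    have hμ0 := hm.1.2 0
    rw [sum_range_succ'] at hμ0
    rcases j with _ | j
    · simp only [hc, Nat.add_one_ne_zero, if_false, onePartFn, if_true, pow_zero, one_mul] at hμ0 ⊢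
      omega
    · simp [hc, onePartFn, hsucc]
  · rcases eq_or_ne i 0 with rfl | hi
    · simpa [hc] using hγ
    · simp only [hc, if_neg hi]
      exact ⟨_, isSortedOf_self (antitone_onePartFn _), dominates_onePartFn_apply_zero (m i)⟩

lemma pDominates_hookFn_of_apply_zero_lt {p n : ℕ} {μ : ℕ → ℕ} (hp : 1 < p)
    (hμ : IsPartition n μ) (hlt : μ 0 < n) (htail : n - μ 0 < p) :
    PDominates p n μ (hookFn (μ 0) (n - μ 0)) := by
  have hn : 0 < n := by omega
  have h1 : μ 1 < p := hμ.apply_one_le.trans_lt htail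
  have hd : 1 ≤ baseDigits p n μ 0 0 := by
    rw [baseDigits_zero_zero hμ hn h1]
    exact Nat.le_add_left_of_le (hμ.one_le_apply_one hlt)
  have hleg : ∑ j ∈ range n, baseDigits p n μ 0 (j + 1) = n - μ 0 := by
    simp only [baseDigits_zero_succ hμ h1]
    have := hμ.sum_range_succ_add_apply_zero
    omega
  refine pDominates_of_zeroth_digit hn (isBasePExpansion_baseDigits hp hμ)
    (γ := hookFn (baseDigits p n μ 0 0) (n - μ 0)) (by simp [hookFn, add_comm])
    (fun j => by simp [hookFn]) ⟨_, isSortedOf_self (antitone_hookFn hd _), ?_⟩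
  have := dominates_hookFn_apply_zero (antitone_baseDigits (p := p) (n := n) (μ := μ) 0) n
  rwa [hleg] at this

lemma pDominates_hookFn_one_of_apply_zero_eq {p n : ℕ} {μ : ℕ → ℕ} (hp : 1 < p)
    (hpn : ¬ p ∣ n) (hμ : IsPartition n μ) (heq : μ 0 = n) :
    PDominates p n μ (hookFn (n - 1) 1) := by
  have hn : 0 < n := Nat.pos_of_ne_zero fun h => hpn (h ▸ dvd_zero p)
  have hsucc : ∀ j, μ (j + 1) = 0 := fun j => by
    have := hμ.1 (Nat.le_add_left 1 j)
    have := hμ.apply_one_le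
    omega
  have h1 : μ 1 < p := by rw [hsucc 0]; omega
  have hd : 1 ≤ n % p := Nat.pos_of_ne_zero fun h => hpn (Nat.dvd_of_mod_eq_zero h)
  have hrow : baseDigits p n μ 0 = onePartFn (n % p) := by
    funext j
    rcases j with _ | j
    · simp [baseDigits_zero_zero hμ hn h1, hsucc, heq, onePartFn]
    · simp [baseDigits_zero_succ hμ h1, hsucc, onePartFn]
  refine pDominates_of_zeroth_digit hn (isBasePExpansion_baseDigits hp hμ)
    (γ := twoPartFn (n % p - 1) 1) ?_ ?_ ?_
  · simp only [twoPartFn, ↓reduceIte, hookFn, hrow, onePartFn]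
    omega
  · rintro (_ | j) <;> simp [hookFn, twoPartFn]
  · have := exists_isSortedOf_twoPartFn_dominates (n % p - 1) 1
    rwa [Nat.sub_add_cancel hd, ← hrow] at this

theorem pDominates_hook_of_dominates_large_general (p n r : ℕ)
    (hpn : ¬ p ∣ n) (hr2 : r < p)
    (μ : ℕ → ℕ) (hμ : IsPartition n μ)
    (h : ∃ a b, a + b = n ∧ 1 ≤ b ∧ b ≤ r ∧ Dominates μ (hookFn a b)) :
    ∃ a b, a + b = n ∧ 1 ≤ b ∧ b ≤ r ∧ PDominates p n μ (hookFn a b) := by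
  obtain ⟨a, b, hab, hb1, hbr, hdom⟩ := h
  have hp : 1 < p := by omega
  have hμ0 : a ≤ μ 0 := by simpa [hookFn] using hdom 1
  rcases (hμ.apply_le 0).lt_or_eq with hlt | heq
  · exact ⟨μ 0, n - μ 0, by omega, by omega, by omega,
      pDominates_hookFn_of_apply_zero_lt hp hμ hlt (by omega)⟩
  · exact ⟨n - 1, 1, by omega, le_rfl, by omega,
      pDominates_hookFn_one_of_apply_zero_eq hp hpn hμ heq⟩

/-- for `n > 2p`, `p ∤ n` and `1 ≤ r < p`, every partition of `n` in the
dominance-upward closure of the hooks `(a,1^b)` with `1 ≤ b ≤ r` `p`-dominates one of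
those hooks. -/
theorem pDominates_hook_of_dominates_large (p n r : ℕ) (hp : p.Prime)
    (hn : 2 * p < n) (hpn : ¬ p ∣ n) (hr1 : 1 ≤ r) (hr2 : r < p)
    (μ : ℕ → ℕ) (hμ : IsPartition n μ)
    (h : ∃ a b, a + b = n ∧ 1 ≤ b ∧ b ≤ r ∧ Dominates μ (hookFn a b)) :
    ∃ a b, a + b = n ∧ 1 ≤ b ∧ b ≤ r ∧ PDominates p n μ (hookFn a b) :=
  pDominates_hook_of_dominates_large_general p n r hpn hr2 μ hμ h
end
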